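/- arXiv:2407.01448 — 2 statements merged into one kernel-verified Lean document; each statement's English description precedes it below -/
import Mathlib

section
/- For σ, σ' ∈ S_n, set Inv(σ) = {(i,j) : 1 ≤ i < j ≤ n, σ⁻¹(i) > σ⁻¹(j)} and for t : Inv(σ) → {0, 1, …, p-1} let u(t) = ∏_{(i,j) ∈ Inv(σ)} (I + t_{ij}·E_{ij}) (product in a fixed order). Then ∑_{t : Inv(σ) → {0,…,p-1}} f_{σ'}(u(t)·w_σ) equals p^{ℓ(σ)} if σ = σ', and equals 0 if σ ≠ σ'. -/
open Matrix MeasureTheory Pointwise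

variable (p n : ℕ) [Fact p.Prime]

/-- The `(i,j)` entry of an element of `GL n ℚ_[p]`. -/
def entry (g : GL (Fin n) ℚ_[p]) (i j : Fin n) : ℚ_[p] :=
  (g : Matrix (Fin n) (Fin n) ℚ_[p]) i j

/-- The Iwahori subgroup `J`, as a subset of `GL n ℚ_[p]`: matrices of `GL_n(ℤ_p)`
(integral matrix with integral inverse) whose entries strictly below the diagonal
lie in `pℤ_p` (i.e. have norm `< 1`). -/
def Jset : Set (GL (Fin n) ℚ_[p]) :=
  {g | (∀ i j, ‖entry p n g i j‖ ≤ 1) ∧ (∀ i j, ‖entry p n g⁻¹ i j‖ ≤ 1) ∧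
       ∀ i j : Fin n, j < i → ‖entry p n g i j‖ < 1}

/-- The diagonal torus `T`. -/
def Tset : Set (GL (Fin n) ℚ_[p]) :=
  {g | ∀ i j : Fin n, i ≠ j → entry p n g i j = 0}

/-- The group `N` of upper unitriangular matrices. -/
def Nset : Set (GL (Fin n) ℚ_[p]) :=
  {g | (∀ i : Fin n, entry p n g i i = 1) ∧ ∀ i j : Fin n, j < i → entry p n g i j = 0}

/-- The upper triangular Borel subgroup `B`. -/
def Bset : Set (GL (Fin n) ℚ_[p]) :=
  {g | ∀ i j : Fin n, j < i → entry p n g i j = 0}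

/-- Permutation matrix `w_σ` of `σ` as an element of `GL n ℚ_[p]`, in the convention
`w_σ · e_j = e_{σ(j)}` (entries `(w_σ)_{ij} = δ_{i, σ(j)}`). -/
noncomputable def permGL (σ : Equiv.Perm (Fin n)) : GL (Fin n) ℚ_[p] :=
  Matrix.GeneralLinearGroup.mkOfDetNeZero ((σ.permMatrix ℚ_[p])ᵀ) (by
    rw [Matrix.det_transpose, Matrix.det_permutation]
    exact_mod_cast Int.cast_ne_zero.mpr (Equiv.Perm.sign σ).ne_zero)

/-- The elementary matrix `I + t·E_{ij}` as an element of `GL n ℚ_[p]`. -/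
noncomputable def elemGL (i j : Fin n) (hij : i ≠ j) (t : ℚ_[p]) : GL (Fin n) ℚ_[p] :=
  Matrix.GeneralLinearGroup.mkOfDetNeZero (Matrix.transvection i j t) (by
    rw [Matrix.det_transvection_of_ne i j hij]
    exact one_ne_zero)

/-- The set of inversions `Inv(σ) = {(i,j) : i < j, σ⁻¹ i > σ⁻¹ j}`. -/
def InvSet (σ : Equiv.Perm (Fin n)) : Finset (Fin n × Fin n) :=
  Finset.univ.filter fun ij => ij.1 < ij.2 ∧ σ⁻¹ ij.2 < σ⁻¹ ij.1

/-- The length `ℓ(σ)` (number of inversions) of `σ`. -/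
def len (σ : Equiv.Perm (Fin n)) : ℕ := (InvSet n σ).card

/-- `i+1` as an element of `Fin n`. -/
def finSucc (i : Fin n) (h : (i : ℕ) + 1 < n) : Fin n := ⟨(i : ℕ) + 1, h⟩

theorem finSucc_ne (i : Fin n) (h : (i : ℕ) + 1 < n) : i ≠ finSucc n i h := by
  simp [finSucc, Fin.ext_iff]

/-- The value of `χδ_B` at `b`, defined through the diagonal entries of `b`:
`(χδ_B)(b) = ∏_{i=1}^n z_i^{v(b_i)} p^{-(n+1-2i) v(b_i)}`. -/
noncomputable def chiDelta (z : Fin n → ℂˣ) (d : GL (Fin n) ℚ_[p]) : ℂ :=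
  ∏ i : Fin n, ((z i : ℂ) ^ (entry p n d i i).valuation *
    (p : ℂ) ^ (-(((n : ℤ) + 1) - 2 * ((i : ℕ) + 1 : ℤ)) * (entry p n d i i).valuation))

/-- The character `ψ(u) = ∏_{i=1}^{n-1} ψ₀(u_{i,i+1})` of `N`, built from an additive
character `ψ₀` of `ℚ_p`. -/
noncomputable def psiN (ψ₀ : ℚ_[p] → ℂ) (u : GL (Fin n) ℚ_[p]) : ℂ :=
  ∏ i : Fin n, if h : (i : ℕ) + 1 < n then ψ₀ (entry p n u i (finSucc n i h)) else 1

/-- `λ(d)` is `σ`-dominant: for all adjacent indices,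
`v(d_i) - v(d_{i+1}) ≥ 0` if `σ⁻¹ i < σ⁻¹(i+1)`, and `≥ -1` if `σ⁻¹ i > σ⁻¹(i+1)`. -/
def IsDom (σ : Equiv.Perm (Fin n)) (d : GL (Fin n) ℚ_[p]) : Prop :=
  ∀ (i : Fin n) (h : (i : ℕ) + 1 < n),
    (σ⁻¹ i < σ⁻¹ (finSucc n i h) →
      0 ≤ (entry p n d i i).valuation
            - (entry p n d (finSucc n i h) (finSucc n i h)).valuation) ∧
    (σ⁻¹ (finSucc n i h) < σ⁻¹ i →
      -1 ≤ (entry p n d i i).valuation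
            - (entry p n d (finSucc n i h) (finSucc n i h)).valuation)

/-- The dominant part `T⁺` of the diagonal torus: `v(d_1) ≥ … ≥ v(d_n)`. -/
def Tplus : Set (GL (Fin n) ℚ_[p]) :=
  {d | d ∈ Tset p n ∧ Antitone fun i : Fin n => (entry p n d i i).valuation}

/-- The double coset `J g J`. -/
def dcos (g : GL (Fin n) ℚ_[p]) : Set (GL (Fin n) ℚ_[p]) :=
  {x | ∃ a ∈ Jset p n, ∃ b ∈ Jset p n, x = a * g * b}
/-- The ordered product `u(t) = ∏_{(i,j) ∈ Inv(σ)} (I + t_{ij}·E_{ij})`, the product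
taken in a fixed (row-major) order. -/
noncomputable def uMat (σ : Equiv.Perm (Fin n))
    (t : {ij : Fin n × Fin n // ij ∈ InvSet n σ} → Fin p) : GL (Fin n) ℚ_[p] :=
  (((List.finRange n) ×ˢ (List.finRange n)).map fun ij =>
    if h : ij ∈ InvSet n σ then
      elemGL p n ij.1 ij.2 (ne_of_lt (Finset.mem_filter.mp h).2.1)
        (((t ⟨ij, h⟩ : ℕ) : ℚ_[p]))
    else 1).prod

section Helpers

set_option linter.unusedSectionVars false

variable {p n}
variable [Fact p.Prime]

lemma permGL_coe (σ : Equiv.Perm (Fin n)) :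
    ((permGL p n σ : GL (Fin n) ℚ_[p]) : Matrix (Fin n) (Fin n) ℚ_[p])
      = (σ⁻¹).toPEquiv.toMatrix := by
  show (σ.permMatrix ℚ_[p])ᵀ = _
  rw [Equiv.Perm.permMatrix, ← PEquiv.toMatrix_symm, ← Equiv.toPEquiv_symm]
  rfl

lemma entry_mul_permGL (g : GL (Fin n) ℚ_[p]) (σ : Equiv.Perm (Fin n)) (i j : Fin n) :
    entry p n (g * permGL p n σ) i j = entry p n g i (σ j) := by
  show ((g : Matrix (Fin n) (Fin n) ℚ_[p]) * (permGL p n σ : Matrix (Fin n) (Fin n) ℚ_[p])) i j = _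
  rw [permGL_coe, PEquiv.mul_toMatrix_toPEquiv]
  rfl

lemma entry_permGL_mul (g : GL (Fin n) ℚ_[p]) (σ : Equiv.Perm (Fin n)) (i j : Fin n) :
    entry p n (permGL p n σ * g) i j = entry p n g (σ⁻¹ i) j := by
  show ((permGL p n σ : Matrix (Fin n) (Fin n) ℚ_[p]) * (g : Matrix (Fin n) (Fin n) ℚ_[p])) i j = _
  rw [permGL_coe, PEquiv.toMatrix_toPEquiv_mul]
  simp [entry, Matrix.submatrix_apply]

lemma permGL_mul_inv (σ : Equiv.Perm (Fin n)) :
    (permGL p n σ : GL (Fin n) ℚ_[p]) * permGL p n σ⁻¹ = 1 := by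
  apply Units.ext
  show ((permGL p n σ : GL (Fin n) ℚ_[p]) : Matrix (Fin n) (Fin n) ℚ_[p]) *
    ((permGL p n σ⁻¹ : GL (Fin n) ℚ_[p]) : Matrix (Fin n) (Fin n) ℚ_[p]) = 1
  rw [permGL_coe, permGL_coe, inv_inv, ← PEquiv.toMatrix_trans, ← Equiv.toPEquiv_trans]
  have : (σ⁻¹ : Equiv.Perm (Fin n)).trans σ = Equiv.refl (Fin n) := by
    ext x; simp
  rw [this, Equiv.toPEquiv_refl, PEquiv.toMatrix_refl]

lemma permGL_inv (σ : Equiv.Perm (Fin n)) :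
    (permGL p n σ : GL (Fin n) ℚ_[p])⁻¹ = permGL p n σ⁻¹ :=
  inv_eq_of_mul_eq_one_right (permGL_mul_inv σ)

/-- Upper unitriangular predicate on matrices. -/
def UTm (M : Matrix (Fin n) (Fin n) ℚ_[p]) : Prop :=
  (∀ i, M i i = 1) ∧ ∀ i j : Fin n, j < i → M i j = 0

lemma UTm_one : UTm (1 : Matrix (Fin n) (Fin n) ℚ_[p]) :=
  ⟨fun i => Matrix.one_apply_eq i, fun _ _ h => Matrix.one_apply_ne (ne_of_gt h)⟩

lemma UTm_mul {A B : Matrix (Fin n) (Fin n) ℚ_[p]} (hA : UTm A) (hB : UTm B) :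
    UTm (A * B) := by
  constructor
  · intro i
    rw [Matrix.mul_apply, Finset.sum_eq_single i]
    · rw [hA.1, hB.1, one_mul]
    · intro k _ hk
      rcases lt_or_gt_of_ne hk with h | h
      · rw [hA.2 i k h, zero_mul]
      · rw [hB.2 k i h, mul_zero]
    · simp
  · intro i j hji
    rw [Matrix.mul_apply]
    apply Finset.sum_eq_zero
    intro k _
    rcases lt_or_ge k i with h | h
    · rw [hA.2 i k h, zero_mul]
    · rw [hB.2 k j (lt_of_lt_of_le hji h), mul_zero]

lemma UTm_list_prod (l : List (Matrix (Fin n) (Fin n) ℚ_[p])) (h : ∀ M ∈ l, UTm M) :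
    UTm l.prod :=
  l.prod_induction UTm (fun _ _ => UTm_mul) UTm_one h

lemma uMat_UT (σ : Equiv.Perm (Fin n)) (t : {ij : Fin n × Fin n // ij ∈ InvSet n σ} → Fin p) :
    UTm ((uMat p n σ t : GL (Fin n) ℚ_[p]) : Matrix (Fin n) (Fin n) ℚ_[p]) := by
  rw [uMat, ← Units.coeHom_apply, map_list_prod, List.map_map]
  apply UTm_list_prod
  intro M hM
  simp only [List.mem_map, Function.comp] at hM
  obtain ⟨ij, -, rfl⟩ := hM
  by_cases h : ij ∈ InvSet n σ
  · have hlt : ij.1 < ij.2 := (Finset.mem_filter.mp h).2.1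
    simp only [h, dif_pos]
    show UTm (Matrix.transvection ij.1 ij.2 _)
    constructor
    · intro i
      rw [Matrix.transvection, Matrix.add_apply, Matrix.one_apply_eq,
        Matrix.single_apply_of_ne, add_zero]
      rintro ⟨h1, h2⟩
      rw [h1, h2] at hlt
      exact absurd hlt (lt_irrefl _)
    · intro i j hji
      rw [Matrix.transvection, Matrix.add_apply,
        Matrix.one_apply_ne (ne_of_gt hji), Matrix.single_apply_of_ne, add_zero]
      rintro ⟨h1, h2⟩
      rw [h1, h2] at hlt
      exact absurd (hlt.trans hji) (lt_irrefl _)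
  · simp only [h, dif_neg, not_false_iff]
    show UTm ((1 : GL (Fin n) ℚ_[p]) : Matrix (Fin n) (Fin n) ℚ_[p])
    rw [Units.val_one]
    exact UTm_one

lemma mem_Bset_of_UT {g : GL (Fin n) ℚ_[p]}
    (h : UTm ((g : GL (Fin n) ℚ_[p]) : Matrix (Fin n) (Fin n) ℚ_[p])) : g ∈ Bset p n :=
  fun i j hji => h.2 i j hji

lemma Bset_blockTriangular {b : GL (Fin n) ℚ_[p]} (hb : b ∈ Bset p n) :
    ((b : GL (Fin n) ℚ_[p]) : Matrix (Fin n) (Fin n) ℚ_[p]).BlockTriangular id :=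
  fun _ _ h => hb _ _ h

lemma inv_mem_Bset {b : GL (Fin n) ℚ_[p]} (hb : b ∈ Bset p n) : b⁻¹ ∈ Bset p n := by
  intro i j hji
  haveI : Invertible ((b : GL (Fin n) ℚ_[p]) : Matrix (Fin n) (Fin n) ℚ_[p]) :=
    b.invertible
  have : ((b⁻¹ : GL (Fin n) ℚ_[p]) : Matrix (Fin n) (Fin n) ℚ_[p])
      = ((b : GL (Fin n) ℚ_[p]) : Matrix (Fin n) (Fin n) ℚ_[p])⁻¹ :=
    Matrix.coe_units_inv b
  show ((b⁻¹ : GL (Fin n) ℚ_[p]) : Matrix (Fin n) (Fin n) ℚ_[p]) i j = 0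
  rw [this]
  exact Matrix.blockTriangular_inv_of_blockTriangular (Bset_blockTriangular hb) hji

lemma mul_mem_Bset {a b : GL (Fin n) ℚ_[p]} (ha : a ∈ Bset p n) (hb : b ∈ Bset p n) :
    a * b ∈ Bset p n := by
  intro i j hji
  show (((a : GL (Fin n) ℚ_[p]) : Matrix (Fin n) (Fin n) ℚ_[p]) *
    ((b : GL (Fin n) ℚ_[p]) : Matrix (Fin n) (Fin n) ℚ_[p])) i j = 0
  exact (Bset_blockTriangular ha).mul (Bset_blockTriangular hb) hji

lemma chiDelta_eq_one {z : Fin n → ℂˣ} {b : GL (Fin n) ℚ_[p]}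
    (hb : ∀ i, entry p n b i i = 1) : chiDelta p n z b = 1 := by
  unfold chiDelta
  apply Finset.prod_eq_one
  intro i _
  rw [hb i, Padic.valuation_one]
  simp

lemma norm_det_le_one (M : Matrix (Fin n) (Fin n) ℚ_[p]) (h : ∀ i j, ‖M i j‖ ≤ 1) :
    ‖M.det‖ ≤ 1 := by
  let N : Matrix (Fin n) (Fin n) ℤ_[p] := fun i j => ⟨M i j, h i j⟩
  have hM : M = N.map (PadicInt.Coe.ringHom (p := p)) := by
    ext i j; rfl
  have hd : (N.map (PadicInt.Coe.ringHom (p := p))).det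
      = ((N.det : ℤ_[p]) : ℚ_[p]) := by
    rw [show N.map (PadicInt.Coe.ringHom (p := p)) = (PadicInt.Coe.ringHom (p := p)).mapMatrix N
      from rfl, ← RingHom.map_det]
    rfl
  rw [hM, hd]
  exact PadicInt.norm_le_one _

lemma one_mem_Jset : (1 : GL (Fin n) ℚ_[p]) ∈ Jset p n := by
  refine ⟨?_, ?_, ?_⟩
  · intro i j
    show ‖((1 : GL (Fin n) ℚ_[p]) : Matrix (Fin n) (Fin n) ℚ_[p]) i j‖ ≤ 1
    rw [Units.val_one]
    rcases eq_or_ne i j with rfl | hij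
    · simp [Matrix.one_apply_eq]
    · simp [Matrix.one_apply_ne hij]
  · intro i j
    show ‖((1⁻¹ : GL (Fin n) ℚ_[p]) : Matrix (Fin n) (Fin n) ℚ_[p]) i j‖ ≤ 1
    rw [inv_one, Units.val_one]
    rcases eq_or_ne i j with rfl | hij
    · simp [Matrix.one_apply_eq]
    · simp [Matrix.one_apply_ne hij]
  · intro i j hji
    show ‖((1 : GL (Fin n) ℚ_[p]) : Matrix (Fin n) (Fin n) ℚ_[p]) i j‖ < 1
    rw [Units.val_one, Matrix.one_apply_ne (ne_of_gt hji)]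
    simp

lemma sigma_eq_of_coset (σ σ' : Equiv.Perm (Fin n))
    {u b j : GL (Fin n) ℚ_[p]} (hu : u ∈ Bset p n) (hb : b ∈ Bset p n)
    (hj : j ∈ Jset p n)
    (heq : u * permGL p n σ = b * permGL p n σ' * j) : σ = σ' := by
  classical
  set b' : GL (Fin n) ℚ_[p] := b⁻¹ * u with hb'def
  have hb' : b' ∈ Bset p n := mul_mem_Bset (inv_mem_Bset hb) hu
  set x : GL (Fin n) ℚ_[p] := permGL p n σ'⁻¹ * b' * permGL p n σ with hxdef
  have hx : x = j := by
    have h2 : u = b * permGL p n σ' * j * (permGL p n σ)⁻¹ := by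
      rw [← heq]; group
    rw [hxdef, hb'def, h2, ← permGL_inv σ']
    group
  -- entries of x and x⁻¹
  have hxe : ∀ i k, entry p n x i k = entry p n b' (σ' i) (σ k) := by
    intro i k
    rw [hxdef, entry_mul_permGL, entry_permGL_mul, inv_inv]
  have hxinv : x⁻¹ = permGL p n σ⁻¹ * b'⁻¹ * permGL p n σ' := by
    rw [hxdef]
    rw [_root_.mul_inv_rev, _root_.mul_inv_rev, permGL_inv σ, permGL_inv σ'⁻¹, inv_inv]
    group
  have hxie : ∀ i k, entry p n x⁻¹ i k = entry p n b'⁻¹ (σ i) (σ' k) := by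
    intro i k
    rw [hxinv, entry_mul_permGL, entry_permGL_mul, inv_inv]
  -- integrality
  have hint : ∀ i k, ‖entry p n b' i k‖ ≤ 1 := by
    intro i k
    have := hj.1 (σ'⁻¹ i) (σ⁻¹ k)
    rw [← hx, hxe] at this
    simpa using this
  have hintinv : ∀ i k, ‖entry p n b'⁻¹ i k‖ ≤ 1 := by
    intro i k
    have := hj.2.1 (σ⁻¹ i) (σ'⁻¹ k)
    rw [← hx, hxie] at this
    simpa using this
  have hstrict : ∀ k : Fin n, σ⁻¹ k < σ'⁻¹ k → ‖entry p n b' k k‖ < 1 := by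
    intro k hk
    have := hj.2.2 (σ'⁻¹ k) (σ⁻¹ k) hk
    rw [← hx, hxe] at this
    simpa using this
  -- determinant norm is 1
  set M : Matrix (Fin n) (Fin n) ℚ_[p] := ((b' : GL (Fin n) ℚ_[p]) : Matrix (Fin n) (Fin n) ℚ_[p])
    with hMdef
  have hMinv : ((b'⁻¹ : GL (Fin n) ℚ_[p]) : Matrix (Fin n) (Fin n) ℚ_[p]) = M⁻¹ :=
    Matrix.coe_units_inv b'
  have hd1 : ‖M.det‖ ≤ 1 := norm_det_le_one M hint
  have hd2 : ‖M⁻¹.det‖ ≤ 1 := by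
    rw [← hMinv]
    exact norm_det_le_one _ hintinv
  have hMunit : IsUnit M.det := by
    apply (Matrix.isUnit_iff_isUnit_det M).mp
    exact ⟨b', rfl⟩
  have hinvmul : M⁻¹.det * M.det = 1 := Matrix.det_nonsing_inv_mul_det M hMunit
  have hdet1 : ‖M.det‖ = 1 := by
    have h1 : ‖M⁻¹.det‖ * ‖M.det‖ = 1 := by
      rw [← norm_mul, hinvmul, norm_one]
    nlinarith [norm_nonneg M.det, norm_nonneg M⁻¹.det]
  -- product of diagonal norms is 1
  have hdiag : ∏ i : Fin n, ‖M i i‖ = 1 := by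
    rw [← norm_prod, ← Matrix.det_of_upperTriangular (Bset_blockTriangular hb')]
    exact hdet1
  -- pointwise inequality
  have hle : ∀ k : Fin n, σ'⁻¹ k ≤ σ⁻¹ k := by
    intro k
    by_contra hcon
    push_neg at hcon
    have h1 : ‖M k k‖ < 1 := hstrict k hcon
    have h2 : ∏ i ∈ Finset.univ.erase k, ‖M i i‖ ≤ 1 :=
      Finset.prod_le_one (fun i _ => norm_nonneg _) (fun i _ => hint i i)
    have h3 : ∏ i : Fin n, ‖M i i‖ < 1 := by
      rw [← Finset.mul_prod_erase Finset.univ _ (Finset.mem_univ k)]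
      calc ‖M k k‖ * ∏ i ∈ Finset.univ.erase k, ‖M i i‖
          ≤ ‖M k k‖ * 1 := by
            apply mul_le_mul_of_nonneg_left h2 (norm_nonneg _)
        _ < 1 := by rw [mul_one]; exact h1
    rw [hdiag] at h3
    exact absurd h3 (lt_irrefl _)
  -- conclude equality
  have hsum : ∑ k : Fin n, ((σ'⁻¹ k : ℕ)) = ∑ k : Fin n, ((σ⁻¹ k : ℕ)) := by
    rw [Equiv.sum_comp σ'⁻¹ (fun i : Fin n => (i : ℕ)),
      Equiv.sum_comp σ⁻¹ (fun i : Fin n => (i : ℕ))]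
  have heqk : ∀ k : Fin n, σ'⁻¹ k = σ⁻¹ k := by
    intro k
    have := (Finset.sum_eq_sum_iff_of_le
      (f := fun k : Fin n => ((σ'⁻¹ k : ℕ)))
      (g := fun k : Fin n => ((σ⁻¹ k : ℕ)))
      (fun k _ => hle k)).mp hsum k (Finset.mem_univ k)
    exact Fin.ext this
  have : σ'⁻¹ = σ⁻¹ := Equiv.ext heqk
  have := inv_injective this
  exact this.symm

end Helpers

/-- `∑_{t : Inv(σ) → {0,…,p-1}} f_{σ'}(u(t)·w_σ)` equals `p^{ℓ(σ)}` if `σ = σ'` and `0`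
otherwise. -/
theorem sum_casselman_over_coset_reps (hn : 2 ≤ n)
    (z : Fin n → ℂˣ) (hz : ∏ i : Fin n, z i = 1)
    (f : Equiv.Perm (Fin n) → GL (Fin n) ℚ_[p] → ℂ)
    (hsupp : ∀ (σ : Equiv.Perm (Fin n)) (g : GL (Fin n) ℚ_[p]),
      (¬ ∃ b ∈ Bset p n, ∃ j ∈ Jset p n, g = b * permGL p n σ * j) → f σ g = 0)
    (hnorm : ∀ σ : Equiv.Perm (Fin n), f σ (permGL p n σ) = 1)
    (hequiv : ∀ (σ : Equiv.Perm (Fin n)), ∀ b ∈ Bset p n, ∀ (g : GL (Fin n) ℚ_[p]),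
      ∀ j ∈ Jset p n, f σ (b * g * j) = chiDelta p n z b * f σ g)
    (σ σ' : Equiv.Perm (Fin n)) :
    ∑ t : {ij : Fin n × Fin n // ij ∈ InvSet n σ} → Fin p,
        f σ' (uMat p n σ t * permGL p n σ)
      = if σ = σ' then (p : ℂ) ^ (len n σ) else 0 := by

  classical
  by_cases hss : σ = σ'
  · subst hss
    rw [if_pos rfl]
    have hval : ∀ t : {ij : Fin n × Fin n // ij ∈ InvSet n σ} → Fin p,
        f σ (uMat p n σ t * permGL p n σ) = 1 := by
      intro t
      have hmem : uMat p n σ t ∈ Bset p n := mem_Bset_of_UT (uMat_UT σ t)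
      have h1 := hequiv σ (uMat p n σ t) hmem (permGL p n σ) 1 one_mem_Jset
      rw [mul_one] at h1
      rw [h1, hnorm, chiDelta_eq_one (fun i => (uMat_UT σ t).1 i), one_mul]
    simp only [hval]
    rw [Finset.sum_const, nsmul_eq_mul, mul_one]
    rw [Finset.card_univ, Fintype.card_fun, Fintype.card_fin, Fintype.card_coe]
    rw [len]
    push_cast
    rfl
  · rw [if_neg hss]
    apply Finset.sum_eq_zero
    intro t _
    apply hsupp
    rintro ⟨b, hb, j, hj, heq⟩
    exact hss (sigma_eq_of_coset σ σ' (mem_Bset_of_UT (uMat_UT σ t)) hb hj heq)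
end

section
/- Let W : G → ℂ satisfy W(u·g) = ψ(u)·W(g) for all u ∈ N, g ∈ G, and W(g·j) = W(g) for all g ∈ G, j ∈ J, and assume the sign Hecke relations: for every 1 ≤ i < n and every g ∈ G, ∑_{t=0}^{p-1} W(g·x_i(t)·w_{s_i}) = -W(g). Then for every σ ∈ S_n and every d ∈ T⁺, W(d·w_σ) = (-p)^{-ℓ(σ)}·W(d). -/
open Matrix MeasureTheory Pointwise

variable (p n : ℕ) [Fact p.Prime]

/-! Induct on `ℓ(σ)`. For `σ ≠ 1` pick a descent `σ(i+1) < σ(i)`, so that `ℓ(σ s_i) = ℓ(σ) - 1`,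
and apply the Hecke relation at `g = d w_σ`. The term `t = 0` is `W(d w_{σ s_i})`. For `t ≠ 0`,
the `GL₂` identity `x(t) w = y(t⁻¹) · diag(t, -t⁻¹) · x(t⁻¹)` (with `y` lower unitriangular)
gives `d w_σ x_i(t) w_{s_i} = u · d w_σ · j` with `j ∈ J` and
`u = (d w_σ) y_i(t⁻¹) (d w_σ)⁻¹` the elementary matrix at position `(σ(i+1), σ(i))` with entry
`t⁻¹ d_{σ(i+1)} / d_{σ(i)}`; this position is above the diagonal, and the entry is integral since
`d` is dominant, so `ψ(u) = 1`. Hence all `p - 1` such terms equal `W(d w_σ)`, and the relation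
reads `W(d w_{σ s_i}) + (p - 1) W(d w_σ) = -W(d w_σ)`. -/

section MatrixIdentities

variable {R ι : Type*} [CommRing R] [Fintype ι] [DecidableEq ι]

theorem transpose_permMatrix_mul_transvection (σ : Equiv.Perm ι) (i j : ι) (c : R) :
    (σ.permMatrix R)ᵀ * transvection i j c = transvection (σ i) (σ j) c * (σ.permMatrix R)ᵀ := by
  rw [transpose_permMatrix, PEquiv.toMatrix_toPEquiv_mul, PEquiv.mul_toMatrix_toPEquiv]
  ext a b
  simp [transvection, one_apply, single_apply, Equiv.eq_symm_apply]

theorem diagonal_mul_transvection {K : Type*} [Field K] (D : ι → K) (i j : ι) (c : K)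
    (hD : D j ≠ 0) :
    diagonal D * transvection i j c = transvection i j (D i * c / D j) * diagonal D := by
  ext a b
  simp only [transvection, diagonal_mul, mul_diagonal, Matrix.add_apply, single_apply, one_apply]
  split_ifs <;> simp_all [field]

theorem transvection_mul_transpose_permMatrix_swap {i j : ι} (hij : i ≠ j) (t : Rˣ) :
    transvection i j (t : R) * ((Equiv.swap i j).permMatrix R)ᵀ =
      transvection j i ((t⁻¹ : Rˣ) : R) *
        diagonal (fun k =>
          ((Function.update (Function.update (1 : ι → Rˣ) i t) j (-t⁻¹) k : Rˣ) : R)) *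
        transvection i j ((t⁻¹ : Rˣ) : R) := by
  rw [transpose_permMatrix, PEquiv.mul_toMatrix_toPEquiv]
  ext a b
  by_cases ha : a = i <;> by_cases ha' : a = j <;> by_cases hb : b = i <;> by_cases hb' : b = j <;>
    simp_all [transvection, Matrix.mul_apply, one_apply, single_apply, diagonal_apply,
      Function.update_apply, Equiv.swap_apply_def, Finset.sum_add_distrib, add_mul, mul_add,
      eq_comm]

end MatrixIdentities

section GeneralLinearGroup

variable {p n}

theorem coe_permGL (σ : Equiv.Perm (Fin n)) :
    (permGL p n σ : Matrix (Fin n) (Fin n) ℚ_[p]) = (σ.permMatrix ℚ_[p])ᵀ := rfl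

theorem coe_elemGL {i j : Fin n} (hij : i ≠ j) (t : ℚ_[p]) :
    (elemGL p n i j hij t : Matrix (Fin n) (Fin n) ℚ_[p]) = transvection i j t := rfl

theorem permGL_one : permGL p n 1 = 1 := by
  ext : 1
  simp [coe_permGL]

theorem permGL_mul (σ τ : Equiv.Perm (Fin n)) :
    permGL p n σ * permGL p n τ = permGL p n (σ * τ) := by
  ext : 1
  simp [coe_permGL, permMatrix_mul]

theorem elemGL_zero {i j : Fin n} (hij : i ≠ j) : elemGL p n i j hij 0 = 1 := by
  ext : 1
  simp [coe_elemGL]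

theorem elemGL_inv {i j : Fin n} (hij : i ≠ j) (t : ℚ_[p]) :
    (elemGL p n i j hij t)⁻¹ = elemGL p n i j hij (-t) := by
  refine inv_eq_of_mul_eq_one_right (Units.ext ?_)
  simp [coe_elemGL, transvection_mul_transvection_same _ _ hij]

noncomputable def diagGL (D : Fin n → ℚ_[p]ˣ) : GL (Fin n) ℚ_[p] :=
  Units.map (diagonalRingHom (Fin n) ℚ_[p]).toMonoidHom (MulEquiv.piUnits.symm D)

theorem coe_diagGL (D : Fin n → ℚ_[p]ˣ) :
    (diagGL D : Matrix (Fin n) (Fin n) ℚ_[p]) = diagonal fun k => (D k : ℚ_[p]) := rfl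

theorem coe_diagGL_inv (D : Fin n → ℚ_[p]ˣ) :
    (((diagGL D)⁻¹ : GL (Fin n) ℚ_[p]) : Matrix (Fin n) (Fin n) ℚ_[p]) =
      diagonal fun k => (((D k)⁻¹ : ℚ_[p]ˣ) : ℚ_[p]) := rfl

theorem elemGL_mul_permGL_swap {i j : Fin n} (hij : i ≠ j) (t : ℚ_[p]ˣ) :
    elemGL p n i j hij t * permGL p n (Equiv.swap i j) =
      elemGL p n j i hij.symm ↑t⁻¹ *
          diagGL (Function.update (Function.update (1 : Fin n → ℚ_[p]ˣ) i t) j (-t⁻¹)) *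
        elemGL p n i j hij ↑t⁻¹ := by
  ext : 1
  exact transvection_mul_transpose_permMatrix_swap hij t

theorem coe_eq_diagonal_of_mem_Tset {d : GL (Fin n) ℚ_[p]} (hd : d ∈ Tset p n) :
    (d : Matrix (Fin n) (Fin n) ℚ_[p]) = diagonal fun k => entry p n d k k := by
  ext i j
  rcases eq_or_ne i j with rfl | hij
  · rw [diagonal_apply_eq]
    rfl
  · rw [diagonal_apply_ne _ hij]
    exact hd i j hij

theorem entry_ne_zero_of_mem_Tset {d : GL (Fin n) ℚ_[p]} (hd : d ∈ Tset p n) (k : Fin n) :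
    entry p n d k k ≠ 0 := by
  have hdet := (Matrix.isUnits_det_units d).ne_zero
  rw [coe_eq_diagonal_of_mem_Tset hd, det_diagonal] at hdet
  exact Finset.prod_ne_zero_iff.1 hdet k (Finset.mem_univ k)

theorem mul_permGL_mul_elemGL {d : GL (Fin n) ℚ_[p]} (hd : d ∈ Tset p n) (σ : Equiv.Perm (Fin n))
    {i j : Fin n} (hij : i ≠ j) (c : ℚ_[p]) :
    d * permGL p n σ * elemGL p n i j hij c =
      elemGL p n (σ i) (σ j) (σ.injective.ne hij)
          (entry p n d (σ i) (σ i) * c / entry p n d (σ j) (σ j)) * (d * permGL p n σ) := by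
  ext : 1
  simp only [Units.val_mul, coe_permGL, coe_elemGL, coe_eq_diagonal_of_mem_Tset hd, mul_assoc,
    transpose_permMatrix_mul_transvection]
  rw [← mul_assoc, diagonal_mul_transvection (fun k => entry p n d k k) _ _ _
    (entry_ne_zero_of_mem_Tset hd _), mul_assoc]

end GeneralLinearGroup

section PadicIntegrality

variable {p n}

theorem norm_natCast_eq_one_of_lt {t : ℕ} (ht₀ : t ≠ 0) (htp : t < p) : ‖(t : ℚ_[p])‖ = 1 :=
  Padic.norm_natCast_eq_one_iff.2 (Nat.coprime_of_lt_prime ht₀ htp Fact.out)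

theorem norm_entry_le_of_mem_Tplus {d : GL (Fin n) ℚ_[p]} (hd : d ∈ Tplus p n) {a b : Fin n}
    (hab : a ≤ b) : ‖entry p n d a a‖ ≤ ‖entry p n d b b‖ := by
  have hp : (1 : ℝ) ≤ p := mod_cast (Fact.out : p.Prime).one_le
  rw [Padic.norm_eq_zpow_neg_valuation (entry_ne_zero_of_mem_Tset hd.1 a),
    Padic.norm_eq_zpow_neg_valuation (entry_ne_zero_of_mem_Tset hd.1 b)]
  exact zpow_le_zpow_right₀ hp (neg_le_neg (hd.2 hab))

theorem norm_transvection_apply_le {i j : Fin n} (hij : i ≠ j) {c : ℚ_[p]} (hc : ‖c‖ ≤ 1)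
    (a b : Fin n) : ‖transvection i j c a b‖ ≤ 1 := by
  simp only [transvection, Matrix.add_apply, one_apply, single_apply]
  split_ifs <;> simp_all

theorem elemGL_mem_Nset {i j : Fin n} (hij : i < j) (c : ℚ_[p]) :
    elemGL p n i j hij.ne c ∈ Nset p n := by
  refine ⟨fun a => ?_, fun a b hba => ?_⟩ <;>
    simp only [entry, coe_elemGL, transvection, Matrix.add_apply, one_apply, single_apply] <;>
    grind

theorem psiN_elemGL_eq_one {ψ₀ : ℚ_[p] → ℂ} (hψ₀ : ∀ x : ℚ_[p], ‖x‖ ≤ 1 → ψ₀ x = 1)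
    {i j : Fin n} (hij : i ≠ j) {c : ℚ_[p]} (hc : ‖c‖ ≤ 1) :
    psiN p n ψ₀ (elemGL p n i j hij c) = 1 :=
  Finset.prod_eq_one fun k _ => by
    split_ifs
    · exact hψ₀ _ (norm_transvection_apply_le hij hc _ _)
    · rfl

theorem elemGL_mem_Jset {i j : Fin n} (hij : i < j) {c : ℚ_[p]} (hc : ‖c‖ ≤ 1) :
    elemGL p n i j hij.ne c ∈ Jset p n := by
  refine ⟨norm_transvection_apply_le hij.ne hc, ?_, fun a b hba => ?_⟩
  · rw [elemGL_inv]
    exact norm_transvection_apply_le hij.ne (by rwa [norm_neg])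
  · rw [(elemGL_mem_Nset hij c).2 a b hba, norm_zero]
    exact one_pos

theorem diagGL_mem_Jset {D : Fin n → ℚ_[p]ˣ} (hD : ∀ k, ‖(D k : ℚ_[p])‖ = 1) :
    diagGL D ∈ Jset p n := by
  refine ⟨fun a b => ?_, fun a b => ?_, fun a b hba => ?_⟩ <;>
    simp only [entry, coe_diagGL, coe_diagGL_inv, diagonal_apply]
  · split_ifs <;> simp [hD]
  · split_ifs <;> simp [hD]
  · simp [hba.ne']

end PadicIntegrality

section Inversions

variable {n}

theorem len_one : len n 1 = 0 := by
  simpa [len, InvSet] using fun _ _ => le_of_lt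

theorem exists_descent {σ : Equiv.Perm (Fin n)} (hσ : σ ≠ 1) :
    ∃ (i : Fin n) (h : (i : ℕ) + 1 < n), σ (finSucc n i h) < σ i := by
  by_contra! hasc
  have hmono : StrictMono σ := by
    cases n with
    | zero => exact fun a => a.elim0
    | succ m =>
      exact Fin.strictMono_iff_lt_succ.2 fun i =>
        (hasc i.castSucc i.succ.isLt).lt_of_ne (σ.injective.ne i.castSucc_lt_succ.ne)
  exact hσ (Equiv.ext (congrFun hmono.eq_id))

theorem swap_apply_lt_swap_apply_iff {i j x y : Fin n} (hj : (j : ℕ) = i + 1)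
    (h₁ : ¬(x = i ∧ y = j)) (h₂ : ¬(x = j ∧ y = i)) :
    Equiv.swap i j x < Equiv.swap i j y ↔ x < y := by
  rw [Equiv.swap_apply_def, Equiv.swap_apply_def]
  split_ifs <;> simp only [Fin.lt_def, Fin.ext_iff] at * <;> omega

theorem invSet_mul_swap {σ : Equiv.Perm (Fin n)} {i j : Fin n} (hj : (j : ℕ) = i + 1)
    (hdesc : σ j < σ i) :
    InvSet n (σ * Equiv.swap i j) = (InvSet n σ).erase (σ j, σ i) := by
  have hij : i < j := Fin.lt_def.2 (by omega)
  ext ⟨a, b⟩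
  obtain ⟨x, rfl⟩ := σ.surjective a
  obtain ⟨y, rfl⟩ := σ.surjective b
  simp only [InvSet, Finset.mem_erase, Finset.mem_filter, Finset.mem_univ, true_and,
    _root_.mul_inv_rev, Equiv.swap_inv, Equiv.Perm.mul_apply, Equiv.Perm.coe_inv,
    Equiv.symm_apply_apply, ne_eq, Prod.mk.injEq, σ.injective.eq_iff]
  by_cases h₁ : x = i ∧ y = j
  · obtain ⟨rfl, rfl⟩ := h₁
    simp [lt_asymm hdesc]
  by_cases h₂ : x = j ∧ y = i
  · obtain ⟨rfl, rfl⟩ := h₂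
    simp [lt_asymm hij]
  rw [swap_apply_lt_swap_apply_iff hj (fun h => h₂ ⟨h.2, h.1⟩) (fun h => h₁ ⟨h.2, h.1⟩)]
  tauto

theorem len_mul_swap_add_one {σ : Equiv.Perm (Fin n)} {i j : Fin n} (hj : (j : ℕ) = i + 1)
    (hdesc : σ j < σ i) : len n (σ * Equiv.swap i j) + 1 = len n σ := by
  rw [len, len, invSet_mul_swap hj hdesc, Finset.card_erase_add_one]
  simpa [InvSet, hdesc] using Fin.lt_def.2 (by omega : (i : ℕ) < j)

theorem len_eq_zero_iff {σ : Equiv.Perm (Fin n)} : len n σ = 0 ↔ σ = 1 := by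
  refine ⟨fun h => ?_, fun h => h ▸ len_one⟩
  by_contra hσ
  obtain ⟨i, hi, hdesc⟩ := exists_descent hσ
  have := len_mul_swap_add_one (σ := σ) (i := i) rfl hdesc
  omega

end Inversions

section Whittaker

variable {p n} {ψ₀ : ℚ_[p] → ℂ} {W : GL (Fin n) ℚ_[p] → ℂ}

theorem whittaker_mul_elemGL_mul_permGL_swap (hψ₀ : ∀ x : ℚ_[p], ‖x‖ ≤ 1 → ψ₀ x = 1)
    (hWN : ∀ u ∈ Nset p n, ∀ g : GL (Fin n) ℚ_[p], W (u * g) = psiN p n ψ₀ u * W g)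
    (hWJ : ∀ g : GL (Fin n) ℚ_[p], ∀ j ∈ Jset p n, W (g * j) = W g)
    {d : GL (Fin n) ℚ_[p]} (hd : d ∈ Tplus p n) {σ : Equiv.Perm (Fin n)} {i j : Fin n}
    (hij : i < j) (hdesc : σ j < σ i) {t : ℚ_[p]ˣ} (ht : ‖(t : ℚ_[p])‖ = 1) :
    W (d * permGL p n σ * elemGL p n i j hij.ne t * permGL p n (Equiv.swap i j)) =
      W (d * permGL p n σ) := by
  have ht' : ‖((t⁻¹ : ℚ_[p]ˣ) : ℚ_[p])‖ = 1 := by simp [ht]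
  set c := entry p n d (σ j) (σ j) * ↑t⁻¹ / entry p n d (σ i) (σ i)
  have hc : ‖c‖ ≤ 1 := by
    rw [norm_div, norm_mul, ht', mul_one]
    exact div_le_one_of_le₀ (norm_entry_le_of_mem_Tplus hd hdesc.le) (norm_nonneg _)
  set D := Function.update (Function.update (1 : Fin n → ℚ_[p]ˣ) i t) j (-t⁻¹)
  have hD : ∀ k, ‖(D k : ℚ_[p])‖ = 1 := by
    intro k
    simp only [D, Function.update_apply]
    split_ifs <;> simp [ht]
  calc W (d * permGL p n σ * elemGL p n i j hij.ne t * permGL p n (Equiv.swap i j))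
      = W (d * permGL p n σ * elemGL p n j i hij.ne.symm ↑t⁻¹ * diagGL D *
          elemGL p n i j hij.ne ↑t⁻¹) := by
        rw [mul_assoc _ (elemGL _ _ _ _ _ _), elemGL_mul_permGL_swap]
        simp only [mul_assoc]
        rfl
    _ = W (elemGL p n (σ j) (σ i) hdesc.ne c * (d * permGL p n σ * diagGL D *
          elemGL p n i j hij.ne ↑t⁻¹)) := by
        rw [mul_permGL_mul_elemGL hd.1]
        simp only [mul_assoc]
        rfl
    _ = W (d * permGL p n σ) := by
        rw [hWN _ (elemGL_mem_Nset hdesc c), psiN_elemGL_eq_one hψ₀ _ hc, one_mul,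
          hWJ _ _ (elemGL_mem_Jset hij ht'.le), hWJ _ _ (diagGL_mem_Jset hD)]

theorem whittaker_mul_permGL_mul_swap (hψ₀ : ∀ x : ℚ_[p], ‖x‖ ≤ 1 → ψ₀ x = 1)
    (hWN : ∀ u ∈ Nset p n, ∀ g : GL (Fin n) ℚ_[p], W (u * g) = psiN p n ψ₀ u * W g)
    (hWJ : ∀ g : GL (Fin n) ℚ_[p], ∀ j ∈ Jset p n, W (g * j) = W g)
    {i : Fin n} (hi : (i : ℕ) + 1 < n)
    (hHecke : ∀ g : GL (Fin n) ℚ_[p],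
      ∑ t : Fin p,
        W (g * elemGL p n i (finSucc n i hi) (finSucc_ne n i hi) ((t : ℕ) : ℚ_[p])
              * permGL p n (Equiv.swap i (finSucc n i hi)))
        = -W g)
    {d : GL (Fin n) ℚ_[p]} (hd : d ∈ Tplus p n) {σ : Equiv.Perm (Fin n)}
    (hdesc : σ (finSucc n i hi) < σ i) :
    W (d * permGL p n (σ * Equiv.swap i (finSucc n i hi))) = -(p : ℂ) * W (d * permGL p n σ) := by
  have : NeZero p := ⟨(Fact.out : p.Prime).ne_zero⟩
  set g := d * permGL p n σ
  have hij : i < finSucc n i hi := Fin.lt_def.2 (Nat.lt_succ_self _)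
  have hterm : ∀ t : Fin p, t ≠ 0 →
      W (g * elemGL p n i (finSucc n i hi) hij.ne ((t : ℕ) : ℚ_[p]) *
        permGL p n (Equiv.swap i (finSucc n i hi))) = W g := fun t ht =>
    have hnorm := norm_natCast_eq_one_of_lt (p := p) (Fin.val_ne_zero_iff.2 ht) t.isLt
    whittaker_mul_elemGL_mul_permGL_swap hψ₀ hWN hWJ hd hij hdesc
      (t := Units.mk0 _ (norm_ne_zero_iff.1 (hnorm ▸ one_ne_zero))) hnorm
  have hzero : W (g * elemGL p n i (finSucc n i hi) hij.ne (((0 : Fin p) : ℕ) : ℚ_[p]) *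
      permGL p n (Equiv.swap i (finSucc n i hi))) =
        W (d * permGL p n (σ * Equiv.swap i (finSucc n i hi))) := by
    rw [Fin.val_zero, Nat.cast_zero, elemGL_zero, mul_one, mul_assoc, permGL_mul]
  have hsum := hHecke g
  rw [← Finset.add_sum_erase _ _ (Finset.mem_univ 0), hzero,
    Finset.sum_congr rfl fun t ht => hterm t (Finset.ne_of_mem_erase ht), Finset.sum_const,
    Finset.card_erase_of_mem (Finset.mem_univ _), Finset.card_univ, Fintype.card_fin,
    nsmul_eq_mul, Nat.cast_pred (NeZero.pos p)] at hsum
  linear_combination hsum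

end Whittaker

theorem whittaker_perm_relation
    (ψ₀ : ℚ_[p] → ℂ)
    (hψtriv : ∀ x : ℚ_[p], ‖x‖ ≤ 1 → ψ₀ x = 1)
    (W : GL (Fin n) ℚ_[p] → ℂ)
    (hWN : ∀ u ∈ Nset p n, ∀ g : GL (Fin n) ℚ_[p], W (u * g) = psiN p n ψ₀ u * W g)
    (hWJ : ∀ g : GL (Fin n) ℚ_[p], ∀ j ∈ Jset p n, W (g * j) = W g)
    (hHecke : ∀ (i : Fin n) (h : (i : ℕ) + 1 < n) (g : GL (Fin n) ℚ_[p]),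
      ∑ t : Fin p,
        W (g * elemGL p n i (finSucc n i h) (finSucc_ne n i h) ((t : ℕ) : ℚ_[p])
              * permGL p n (Equiv.swap i (finSucc n i h)))
        = -W g)
    (σ : Equiv.Perm (Fin n)) (d : GL (Fin n) ℚ_[p]) (hd : d ∈ Tplus p n) :
    W (d * permGL p n σ) = (-(p : ℂ)) ^ (-(len n σ : ℤ)) * W d := by
  induction hk : len n σ generalizing σ with
  | zero => simp [len_eq_zero_iff.1 hk, permGL_one]
  | succ k ih =>
    obtain ⟨i, hi, hdesc⟩ := exists_descent fun h : σ = 1 => by simp [h, len_one] at hk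
    have hlen : len n (σ * Equiv.swap i (finSucc n i hi)) = k := by
      have := len_mul_swap_add_one (σ := σ) (i := i) rfl hdesc
      omega
    have hstep := whittaker_mul_permGL_mul_swap hψtriv hWN hWJ hi (hHecke i hi) hd hdesc
    rw [ih _ hlen] at hstep
    have hp : (-(p : ℂ)) ≠ 0 := by simpa using (Fact.out : p.Prime).ne_zero
    calc W (d * permGL p n σ) = (-(p : ℂ))⁻¹ * ((-(p : ℂ)) ^ (-(k : ℤ)) * W d) := by
          rw [hstep, inv_mul_cancel_left₀ hp]
      _ = (-(p : ℂ)) ^ (-((k + 1 : ℕ) : ℤ)) * W d := by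
          rw [Nat.cast_succ, neg_add, zpow_add₀ hp, _root_.zpow_neg_one]
          ring
end
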